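/- arXiv:2409.01349 — 3 statements merged into one kernel-verified Lean document; each statement's English description precedes it below -/
import Mathlib

section
/- Let p > 1 and let a, b ∈ ℝ with (a, b) ≠ (0, 0). Then |b|^{p−2} b − |a|^{p−2} a = (p−1)(b−a) ∫₀¹ |a + s(b−a)|^{p−2} ds, where the integral on the right-hand side is finite. -/
/-!
For `r > -1` the odd function `t ↦ |t| ^ r * t / (r + 1)` is an antiderivative of `|t| ^ r`
(on each side of `0` this is `∫ x ^ r`, transported to `t < 0` by `t ↦ -t`). The affine
substitution `x = a + s (b - a)` turns `(b - a) ∫₀¹ |a + s (b - a)| ^ (p - 2) ds` into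
`∫ₐᵇ |x| ^ (p - 2) dx`, which gives the identity with `r = p - 2`.
-/

open MeasureTheory Real

theorem intervalIntegrable_abs_rpow {r : ℝ} (hr : -1 < r) (a b : ℝ) :
    IntervalIntegrable (fun x : ℝ => |x| ^ r) volume a b := by
  have h := (intervalIntegral.intervalIntegrable_cpow' (a := a) (b := b) (r := r) (by simpa)).norm
  simpa [Complex.norm_cpow_real] using h

theorem integral_zero_abs_rpow_of_nonneg {r : ℝ} (hr : -1 < r) {c : ℝ} (hc : 0 ≤ c) :
    ∫ x in (0 : ℝ)..c, |x| ^ r = |c| ^ r * c / (r + 1) := by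
  have hr' : r + 1 ≠ 0 := by linarith
  rw [intervalIntegral.integral_congr (g := fun x : ℝ => x ^ r) fun x hx => by
      rw [Set.uIcc_of_le hc] at hx; simp [abs_of_nonneg hx.1],
    integral_rpow (Or.inl hr), zero_rpow hr', sub_zero, abs_of_nonneg hc, rpow_add_one' hc hr']

theorem integral_zero_abs_rpow {r : ℝ} (hr : -1 < r) (c : ℝ) :
    ∫ x in (0 : ℝ)..c, |x| ^ r = |c| ^ r * c / (r + 1) := by
  rcases le_total 0 c with hc | hc
  · exact integral_zero_abs_rpow_of_nonneg hr hc
  · have h := intervalIntegral.integral_comp_neg (a := 0) (b := c) fun x : ℝ => |x| ^ r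
    simp only [abs_neg, neg_zero] at h
    rw [h, intervalIntegral.integral_symm, integral_zero_abs_rpow_of_nonneg hr (neg_nonneg.2 hc),
      abs_neg]
    ring

theorem integral_abs_rpow {r : ℝ} (hr : -1 < r) (a b : ℝ) :
    ∫ x in a..b, |x| ^ r = (|b| ^ r * b - |a| ^ r * a) / (r + 1) := by
  rw [← intervalIntegral.integral_add_adjacent_intervals
      (intervalIntegrable_abs_rpow hr a 0) (intervalIntegrable_abs_rpow hr 0 b),
    intervalIntegral.integral_symm, integral_zero_abs_rpow hr, integral_zero_abs_rpow hr]
  ring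

section Segment

variable {E : Type*} [NormedAddCommGroup E] {f : ℝ → E} {a b : ℝ}

theorem IntervalIntegrable.comp_add_mul_sub (hf : IntervalIntegrable f volume a b) :
    IntervalIntegrable (fun s => f (a + s * (b - a))) volume 0 1 := by
  rcases eq_or_ne b a with rfl | hba
  · simp
  · have h := (hf.comp_add_left a).comp_mul_right (c := b - a)
    simpa [sub_ne_zero.2 hba, add_comm] using h

variable [NormedSpace ℝ E]

theorem intervalIntegral.smul_integral_comp_add_mul_sub :
    (b - a) • ∫ s in (0 : ℝ)..1, f (a + s * (b - a)) = ∫ x in a..b, f x := by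
  simpa [mul_comm, add_comm] using
    intervalIntegral.smul_integral_comp_mul_add f (b - a) a (a := 0) (b := 1)

end Segment

theorem abs_rpow_sub_eq_integral_general (p : ℝ) (hp : 1 < p) (a b : ℝ) :
    IntervalIntegrable (fun s : ℝ => |a + s * (b - a)| ^ (p - 2)) volume 0 1 ∧
    |b| ^ (p - 2) * b - |a| ^ (p - 2) * a =
      (p - 1) * (b - a) * ∫ s in (0 : ℝ)..1, |a + s * (b - a)| ^ (p - 2) := by
  have hr : -1 < p - 2 := by linarith
  refine ⟨(intervalIntegrable_abs_rpow hr a b).comp_add_mul_sub, ?_⟩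
  rw [mul_assoc, ← smul_eq_mul (b - a),
    intervalIntegral.smul_integral_comp_add_mul_sub (f := fun x => |x| ^ (p - 2)),
    integral_abs_rpow hr, show p - 2 + 1 = p - 1 by ring,
    mul_div_cancel₀ _ (by linarith : p - 1 ≠ 0)]

/-- For `p > 1` and `(a,b) ≠ (0,0)`,
`|b|^{p-2}b − |a|^{p-2}a = (p−1)(b−a) ∫₀¹ |a + s(b−a)|^{p-2} ds`,
the integral on the right-hand side being finite. -/
theorem abs_rpow_sub_eq_integral (p : ℝ) (hp : 1 < p) (a b : ℝ)
    (hab : (a, b) ≠ ((0 : ℝ), (0 : ℝ))) :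
    IntervalIntegrable (fun s : ℝ => |a + s * (b - a)| ^ (p - 2)) volume 0 1 ∧
    |b| ^ (p - 2) * b - |a| ^ (p - 2) * a =
      (p - 1) * (b - a) * ∫ s in (0 : ℝ)..1, |a + s * (b - a)| ^ (p - 2) :=
  abs_rpow_sub_eq_integral_general p hp a b
end

section
/- Let p > 1, t ∈ [0,1], let U, V be positive real numbers, and let A, B ∈ ℝ^N. Set Q = (t U^p + (1−t) V^p)^{1/p}. Then ‖Q^{1−p} ( t U^{p−1} A + (1−t) V^{p−1} B )‖^p ≤ t ‖A‖^p + (1−t) ‖B‖^p, where ‖·‖ is the Euclidean norm on ℝ^N. -/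
open Real

/-!
With weights `w₁ = t U^p` and `w₂ = (1 - t) V^p`, whose sum is `Q^p`, the vector inside the norm
is `w₁ • (A / U) + w₂ • (B / V)`. By the triangle inequality and the weighted Hölder inequality
`(w₁ x + w₂ y)^p ≤ (w₁ + w₂)^(p-1) (w₁ x^p + w₂ y^p)` at `x = ‖A‖ / U`, `y = ‖B‖ / V`, the `p`-th
power of its norm is at most `Q^(p(p-1)) (t ‖A‖^p + (1 - t) ‖B‖^p)`, and the prefactor
`Q^(p(1-p))` cancels this power of `Q`.
-/

theorem weighted_add_rpow_le {p w₁ w₂ x y : ℝ} (hp : 1 ≤ p) (hw₁ : 0 ≤ w₁) (hw₂ : 0 ≤ w₂)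
    (hx : 0 ≤ x) (hy : 0 ≤ y) :
    (w₁ * x + w₂ * y) ^ p ≤ (w₁ + w₂) ^ (p - 1) * (w₁ * x ^ p + w₂ * y ^ p) := by
  have hp₀ : p ≠ 0 := by positivity
  have holder := inner_le_weight_mul_Lp_of_nonneg Finset.univ hp ![w₁, w₂] ![x, y]
    (by simp [Fin.forall_fin_two, hw₁, hw₂]) (by simp [Fin.forall_fin_two, hx, hy])
  simp only [Fin.sum_univ_two, Matrix.cons_val_zero, Matrix.cons_val_one] at holder
  calc (w₁ * x + w₂ * y) ^ p
      ≤ ((w₁ + w₂) ^ (1 - p⁻¹) * (w₁ * x ^ p + w₂ * y ^ p) ^ p⁻¹) ^ p := by gcongr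
    _ = (w₁ + w₂) ^ (p - 1) * (w₁ * x ^ p + w₂ * y ^ p) := by
      rw [mul_rpow (by positivity) (by positivity), ← rpow_mul (by positivity),
        ← rpow_mul (by positivity), inv_mul_cancel₀ hp₀, rpow_one, sub_mul, one_mul,
        inv_mul_cancel₀ hp₀]

theorem hidden_convexity_nonneg {p α β U V a b : ℝ} (hp : 1 ≤ p) (hα : 0 ≤ α) (hβ : 0 ≤ β)
    (hαβ : 0 < α + β) (hU : 0 < U) (hV : 0 < V) (ha : 0 ≤ a) (hb : 0 ≤ b) :
    (((α * U ^ p + β * V ^ p) ^ (1 / p)) ^ (1 - p) *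
        (α * U ^ (p - 1) * a + β * V ^ (p - 1) * b)) ^ p ≤ α * a ^ p + β * b ^ p := by
  set s := α * U ^ p + β * V ^ p
  have hs : 0 < s := by
    rcases hα.eq_or_lt with rfl | hα
    · simp only [zero_add] at hαβ; positivity
    · positivity
  have hcomb : α * U ^ (p - 1) * a + β * V ^ (p - 1) * b
      = α * U ^ p * (a / U) + β * V ^ p * (b / V) := by
    rw [rpow_sub_one hU.ne', rpow_sub_one hV.ne']; ring
  have hholder := weighted_add_rpow_le hp (by positivity : 0 ≤ α * U ^ p)
    (by positivity : 0 ≤ β * V ^ p) (div_nonneg ha hU.le) (div_nonneg hb hV.le)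
  have hUa : α * U ^ p * (a ^ p / U ^ p) = α * a ^ p := by field_simp
  have hVb : β * V ^ p * (b ^ p / V ^ p) = β * b ^ p := by field_simp
  rw [div_rpow ha hU.le, div_rpow hb hV.le, hUa, hVb] at hholder
  calc ((s ^ (1 / p)) ^ (1 - p) * (α * U ^ (p - 1) * a + β * V ^ (p - 1) * b)) ^ p
      = s ^ (1 - p) * (α * U ^ p * (a / U) + β * V ^ p * (b / V)) ^ p := by
        rw [hcomb, mul_rpow (by positivity) (by positivity), ← rpow_mul hs.le,
          ← rpow_mul hs.le]
        congr 2
        field_simp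
    _ ≤ s ^ (1 - p) * (s ^ (p - 1) * (α * a ^ p + β * b ^ p)) := by gcongr
    _ = α * a ^ p + β * b ^ p := by
        rw [← mul_assoc, ← rpow_add hs, sub_add_sub_cancel, sub_self, rpow_zero, one_mul]

theorem norm_smul_add_smul_le {E : Type*} [SeminormedAddCommGroup E] [NormedSpace ℝ E]
    {α β : ℝ} (hα : 0 ≤ α) (hβ : 0 ≤ β) (x y : E) :
    ‖α • x + β • y‖ ≤ α * ‖x‖ + β * ‖y‖ :=
  (norm_add_le _ _).trans_eq (by rw [norm_smul_of_nonneg hα, norm_smul_of_nonneg hβ])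

theorem hidden_convexity_gradient_general (N : ℕ) (p : ℝ) (hp : 1 < p)
    (t : ℝ) (ht : t ∈ Set.Icc (0 : ℝ) 1) (U V : ℝ) (hU : 0 < U) (hV : 0 < V)
    (A B : EuclideanSpace ℝ (Fin N)) (Q : ℝ)
    (hQ : Q = (t * U ^ p + (1 - t) * V ^ p) ^ (1 / p)) :
    ‖Q ^ (1 - p) • ((t * U ^ (p - 1)) • A + ((1 - t) * V ^ (p - 1)) • B)‖ ^ p ≤
      t * ‖A‖ ^ p + (1 - t) * ‖B‖ ^ p := by
  subst hQ
  obtain ⟨ht₀, ht₁⟩ := ht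
  have ht₁' : 0 ≤ 1 - t := sub_nonneg.2 ht₁
  refine le_trans ?_ (hidden_convexity_nonneg hp.le ht₀ ht₁' (by simp) hU hV
    (norm_nonneg A) (norm_nonneg B))
  rw [norm_smul_of_nonneg (by positivity)]
  gcongr
  exact norm_smul_add_smul_le (by positivity) (by positivity) A B

/-- **hidden convexity, pointwise form.** For `p > 1`, `t ∈ [0,1]`,
`U, V > 0`, `A, B ∈ ℝ^N` and `Q = (tU^p + (1−t)V^p)^{1/p}`, one has
`‖Q^{1−p}(tU^{p−1}A + (1−t)V^{p−1}B)‖^p ≤ t‖A‖^p + (1−t)‖B‖^p`. -/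
theorem hidden_convexity_gradient (N : ℕ) (hN : 1 ≤ N) (p : ℝ) (hp : 1 < p)
    (t : ℝ) (ht : t ∈ Set.Icc (0 : ℝ) 1) (U V : ℝ) (hU : 0 < U) (hV : 0 < V)
    (A B : EuclideanSpace ℝ (Fin N)) (Q : ℝ)
    (hQ : Q = (t * U ^ p + (1 - t) * V ^ p) ^ (1 / p)) :
    ‖Q ^ (1 - p) • ((t * U ^ (p - 1)) • A + ((1 - t) * V ^ (p - 1)) • B)‖ ^ p ≤
      t * ‖A‖ ^ p + (1 - t) * ‖B‖ ^ p :=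
  hidden_convexity_gradient_general N p hp t ht U V hU hV A B Q hQ
end

section
/- Let p > 1. For all real numbers a and b, |a − b|^{p−2} (a − b) (a⁺ − b⁺) ≥ |a⁺ − b⁺|^p, where a⁺ = max(a, 0) and b⁺ = max(b, 0). -/
open Real

/-- For `p > 1` and all reals `a, b`,
`|a − b|^{p−2}(a − b)(a⁺ − b⁺) ≥ |a⁺ − b⁺|^p` where `a⁺ = max a 0`. -/
theorem posPart_test_inequality (p : ℝ) (hp : 1 < p) (a b : ℝ) :
    |max a 0 - max b 0| ^ p ≤ |a - b| ^ (p - 2) * (a - b) * (max a 0 - max b 0) := by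
  set c := max a 0 - max b 0 with hc
  have habs : |c| ≤ |a - b| := abs_max_sub_max_le_abs a b 0
  have hsign : 0 ≤ (a - b) * c := by
    rcases le_total a b with h | h
    · have h1 : a - b ≤ 0 := sub_nonpos.mpr h
      have h2 : c ≤ 0 := sub_nonpos.mpr (max_le_max h le_rfl)
      nlinarith
    · exact mul_nonneg (sub_nonneg.mpr h) (sub_nonneg.mpr (max_le_max h le_rfl))
  rcases eq_or_ne c 0 with hc0 | hc0
  · have : |c| ^ p = 0 := by
      rw [hc0, abs_zero, Real.zero_rpow (by linarith : p ≠ 0)]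
    rw [this, hc0, mul_zero]
  rcases eq_or_ne (a - b) 0 with hd | hd
  · exact absurd (le_antisymm (by simpa [hd] using habs) (abs_nonneg c))
      (abs_ne_zero.mpr hc0)
  have hdpos : 0 < |a - b| := abs_pos.mpr hd
  have key : |a - b| ^ (p - 2) * (a - b) * c = |a - b| ^ (p - 1) * |c| := by
    have h1 : (a - b) * c = |a - b| * |c| := by
      rw [← abs_mul, abs_of_nonneg hsign]
    rw [mul_assoc, h1, ← mul_assoc, ← Real.rpow_add_one (ne_of_gt hdpos)]
    ring_nf
  rw [key]
  have hsplit : |c| ^ p = |c| ^ (p - 1) * |c| := by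
    rw [← Real.rpow_add_one (abs_ne_zero.mpr hc0)]
    ring_nf
  rw [hsplit]
  exact mul_le_mul_of_nonneg_right
    (Real.rpow_le_rpow (abs_nonneg c) habs (by linarith)) (abs_nonneg c)
end
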